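/- Let Q ⊆ V, v ∈ Q with max_{u∈Q} x(v,u) ≥ 1/3, let (Q1, Q2) with v ∈ Q1 be the pair returned by One-Third-Refine-Cut(Q, v, x), and set Q2' := Q2 ∩ B_{1/2}. Then (1/6)·|NFPrs(Q1,Q2)| ≤ Σ_{ {i,j}∈NFPrs(Q1,Q2), i∈Q1, j∈Q2' } ( min(x(v,j),1/3) − x(v,i) ) + Σ_{ {i,j}∈NFPrs(Q1,Q2), i∈Q1, j∈Q2∖Q2', {i,j}∈E } x(i,j) + (1/6)·|{ {i,j}∈NFPrs(Q1,Q2) : i∈Q1, j∈Q2∖Q2', {i,j}∈NE }|. -/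

import Mathlib

/-!
Pairs `(i, j)` with `j ∉ B_{1/2}` pay for themselves: `x(i,j) ≥ x(v,j) - x(v,i) ≥ 1/2 - 1/3`
for edges, and the `1/6` term for non-edges. The remaining pairs have `j ∈ B_{1/2}` and are
never forbidden, as `x(i,j) ≤ x(v,i) + x(v,j) < 1/3 + 1/2`. If the cut is `({v}, Q ∖ {v})`,
their charge is `∑_{B_{1/2}} min(x(v,j), 1/3) = (|B_{1/2}| - |B_{1/3}|)/3 + ∑_{B_{1/3}} x(v,q)`,
which the test of the procedure bounds below by `(|B_{1/2}| - 1)/6`. Otherwise each `j`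
contributes `|B_{1/3}|/3 - ∑_{B_{1/3}} x(v,q)`, and the failed test makes this exceed
`(|B_{1/2}| + 1)/6 ≥ |B_{1/3}|/6`.
-/

open Finset
open scoped Classical

/-- `cutBall x v Q r` is the set of elements of `Q` at distance `< r` from `v`. -/
noncomputable def cutBall {V : Type*} [DecidableEq V]
    (x : V → V → ℝ) (v : V) (Q : Finset V) (r : ℝ) : Finset V :=
  Q.filter fun u => x v u < r

/-- The procedure One-Third-Refine-Cut: it returns `({v}, Q ∖ {v})` if
`Σ_{q∈B_{1/3}} x(v,q) ≥ (1/3)|B_{1/3}| − (1/6)|B_{1/2}| − 1/6`,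
and `(B_{1/3}, Q ∖ B_{1/3})` otherwise. -/
noncomputable def oneThirdCut {V : Type*} [DecidableEq V]
    (x : V → V → ℝ) (Q : Finset V) (v : V) : Finset V × Finset V :=
  if (1 / 3 : ℝ) * (cutBall x v Q (1 / 3)).card
        - (1 / 6) * (cutBall x v Q (1 / 2)).card - 1 / 6
      ≤ ∑ q ∈ cutBall x v Q (1 / 3), x v q
  then ({v}, Q \ {v})
  else (cutBall x v Q (1 / 3), Q \ cutBall x v Q (1 / 3))

/-- A pair `{i,j}` is forbidden when it is a non-edge pair of distance one. -/
def Forbidden {V : Type*} (E : V → V → Prop) (x : V → V → ℝ) (i j : V) : Prop :=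
  ¬ E i j ∧ x i j = 1

lemma not_forbidden_of_lt_one {V : Type*} {x : V → V → ℝ} {E : V → V → Prop} {i j : V}
    (h : x i j < 1) : ¬ Forbidden E x i j :=
  fun hf => h.ne hf.2

lemma one_sixth_le_of_far {V : Type*} {x : V → V → ℝ} (htri : ∀ u w p, x u w ≤ x u p + x p w)
    {v i j : V} (hi : x v i ≤ 1 / 3) (hj : 1 / 2 ≤ x v j) : 1 / 6 ≤ x i j := by
  linarith [htri v j i]

lemma card_filter_product_eq_add {α β : Type*} [DecidableEq β] (A : Finset α) (B C : Finset β)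
    (P R : α × β → Prop) [DecidablePred P] [DecidablePred R] :
    #((A ×ˢ B).filter P) = #((A ×ˢ (B ∩ C)).filter P)
      + #((A ×ˢ (B \ (B ∩ C))).filter fun p => P p ∧ R p)
      + #((A ×ˢ (B \ (B ∩ C))).filter fun p => P p ∧ ¬ R p) := by
  rw [add_assoc, ← filter_filter, ← filter_filter, card_filter_add_card_filter_not,
    ← card_union_of_disjoint, ← filter_union, ← product_union,
    union_sdiff_of_subset inter_subset_left]
  exact disjoint_filter_filter (disjoint_product.2 (Or.inr disjoint_sdiff))

section

variable {V : Type*} [DecidableEq V] {x : V → V → ℝ} {v : V} {Q : Finset V}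

@[simp]
lemma mem_cutBall {r : ℝ} {u : V} : u ∈ cutBall x v Q r ↔ u ∈ Q ∧ x v u < r :=
  mem_filter

lemma cutBall_subset_cutBall {r s : ℝ} (hrs : r ≤ s) : cutBall x v Q r ⊆ cutBall x v Q s :=
  fun _ hu => by
    rw [mem_cutBall] at hu ⊢
    exact ⟨hu.1, hu.2.trans_le hrs⟩

lemma min_eq_of_mem_sdiff_cutBall {r : ℝ} {j : V} {A : Finset V} (hj : j ∈ A \ cutBall x v Q r)
    (hA : A ⊆ Q) : min (x v j) r = r := by
  rw [mem_sdiff, mem_cutBall, not_and, not_lt] at hj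
  exact min_eq_right (hj.2 (hA hj.1))

lemma sum_min_cutBall {r s : ℝ} (hrs : r ≤ s) :
    ∑ j ∈ cutBall x v Q s, min (x v j) r
      = ((#(cutBall x v Q s) : ℝ) - #(cutBall x v Q r)) * r + ∑ j ∈ cutBall x v Q r, x v j := by
  have hsub := cutBall_subset_cutBall (x := x) (v := v) (Q := Q) hrs
  rw [← sum_sdiff hsub, ← Nat.cast_sub (card_le_card hsub), ← card_sdiff_of_subset hsub,
    sum_congr rfl fun j hj => min_eq_of_mem_sdiff_cutBall hj (filter_subset _ _), sum_const,
    nsmul_eq_mul, sum_congr rfl fun j hj => min_eq_left (mem_cutBall.1 hj).2.le]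

lemma cut_bound_of_near_bound (htri : ∀ u w p, x u w ≤ x u p + x p w) (E : V → V → Prop)
    {Q1 Q2 : Finset V} (hQ2 : Q2 ⊆ Q) (hQ1 : ∀ i ∈ Q1, x v i ≤ 1 / 3)
    (hnear : (1 / 6 : ℝ) *
        #((Q1 ×ˢ (Q2 ∩ cutBall x v Q (1 / 2))).filter fun p => ¬ Forbidden E x p.1 p.2)
      ≤ ∑ p ∈ (Q1 ×ˢ (Q2 ∩ cutBall x v Q (1 / 2))).filter (fun p => ¬ Forbidden E x p.1 p.2),
          (min (x v p.2) (1 / 3) - x v p.1)) :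
    (1 / 6 : ℝ) * #((Q1 ×ˢ Q2).filter fun p => ¬ Forbidden E x p.1 p.2)
      ≤ (∑ p ∈ (Q1 ×ˢ (Q2 ∩ cutBall x v Q (1 / 2))).filter
            (fun p => ¬ Forbidden E x p.1 p.2),
          (min (x v p.2) (1 / 3) - x v p.1))
        + (∑ p ∈ (Q1 ×ˢ (Q2 \ (Q2 ∩ cutBall x v Q (1 / 2)))).filter
              (fun p => ¬ Forbidden E x p.1 p.2 ∧ E p.1 p.2),
            x p.1 p.2)
        + (1 / 6 : ℝ) *
            #((Q1 ×ˢ (Q2 \ (Q2 ∩ cutBall x v Q (1 / 2)))).filter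
              fun p => ¬ Forbidden E x p.1 p.2 ∧ ¬ E p.1 p.2) := by
  have hfar : (1 / 6 : ℝ) *
        #((Q1 ×ˢ (Q2 \ (Q2 ∩ cutBall x v Q (1 / 2)))).filter
          fun p => ¬ Forbidden E x p.1 p.2 ∧ E p.1 p.2)
      ≤ ∑ p ∈ (Q1 ×ˢ (Q2 \ (Q2 ∩ cutBall x v Q (1 / 2)))).filter
          (fun p => ¬ Forbidden E x p.1 p.2 ∧ E p.1 p.2), x p.1 p.2 := by
    rw [mul_comm, ← nsmul_eq_mul]
    refine card_nsmul_le_sum _ _ _ fun p hp => ?_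
    simp only [mem_filter, mem_product, mem_sdiff, mem_inter, mem_cutBall, not_and, not_lt] at hp
    exact one_sixth_le_of_far htri (hQ1 _ hp.1.1) (hp.1.2.2 hp.1.2.1 (hQ2 hp.1.2.1))
  rw [card_filter_product_eq_add Q1 Q2 (cutBall x v Q (1 / 2)) _ fun p => E p.1 p.2]
  push_cast
  linarith

lemma near_bound_singleton (hvv : x v v = 0) (hv : v ∈ Q) (E : V → V → Prop)
    (hcond : (1 / 3 : ℝ) * #(cutBall x v Q (1 / 3)) - 1 / 6 * #(cutBall x v Q (1 / 2)) - 1 / 6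
      ≤ ∑ q ∈ cutBall x v Q (1 / 3), x v q) :
    (1 / 6 : ℝ) *
        #(({v} ×ˢ ((Q \ {v}) ∩ cutBall x v Q (1 / 2))).filter fun p => ¬ Forbidden E x p.1 p.2)
      ≤ ∑ p ∈ ({v} ×ˢ ((Q \ {v}) ∩ cutBall x v Q (1 / 2))).filter
          (fun p => ¬ Forbidden E x p.1 p.2), (min (x v p.2) (1 / 3) - x v p.1) := by
  have hnear : (Q \ {v}) ∩ cutBall x v Q (1 / 2) = (cutBall x v Q (1 / 2)).erase v := by
    ext j
    simp only [mem_inter, mem_sdiff, mem_singleton, mem_erase, mem_cutBall]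
    tauto
  have hv_mem : v ∈ cutBall x v Q (1 / 2) := mem_cutBall.2 ⟨hv, by norm_num [hvv]⟩
  rw [hnear, filter_true_of_mem fun p hp => not_forbidden_of_lt_one ?_, card_product,
    card_singleton, one_mul, sum_product, sum_singleton, card_erase_of_mem hv_mem]
  · simp only [hvv, sub_zero]
    rw [sum_erase _ (by norm_num [hvv]), sum_min_cutBall (by norm_num),
      Nat.cast_sub (card_pos.2 ⟨v, hv_mem⟩)]
    push_cast
    linarith
  · rw [mem_product, mem_singleton, mem_erase, mem_cutBall] at hp
    rw [hp.1]
    linarith [hp.2.2.2]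

lemma near_bound_cutBall (hsym : ∀ u w, x u w = x w u) (htri : ∀ u w p, x u w ≤ x u p + x p w)
    (E : V → V → Prop)
    (hcond : ∑ q ∈ cutBall x v Q (1 / 3), x v q
      < (1 / 3 : ℝ) * #(cutBall x v Q (1 / 3)) - 1 / 6 * #(cutBall x v Q (1 / 2)) - 1 / 6) :
    (1 / 6 : ℝ) *
        #((cutBall x v Q (1 / 3) ×ˢ ((Q \ cutBall x v Q (1 / 3)) ∩ cutBall x v Q (1 / 2))).filter
          fun p => ¬ Forbidden E x p.1 p.2)
      ≤ ∑ p ∈ (cutBall x v Q (1 / 3) ×ˢ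
            ((Q \ cutBall x v Q (1 / 3)) ∩ cutBall x v Q (1 / 2))).filter
          (fun p => ¬ Forbidden E x p.1 p.2), (min (x v p.2) (1 / 3) - x v p.1) := by
  set B := cutBall x v Q (1 / 3)
  set T := (Q \ B) ∩ cutBall x v Q (1 / 2)
  have hnf : ∀ p ∈ B ×ˢ T, ¬ Forbidden E x p.1 p.2 := fun p hp => by
    simp only [B, T, mem_product, mem_inter, mem_cutBall] at hp
    exact not_forbidden_of_lt_one (by linarith [htri p.1 p.2 v, hsym p.1 v, hp.1.2, hp.2.2.2])
  have hsum : ∑ p ∈ B ×ˢ T, (min (x v p.2) (1 / 3) - x v p.1)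
      = #T * ((1 / 3 : ℝ) * #B - ∑ q ∈ B, x v q) := by
    rw [sum_product_right, ← nsmul_eq_mul, ← sum_const]
    refine sum_congr rfl fun j hj => ?_
    dsimp only
    rw [min_eq_of_mem_sdiff_cutBall (mem_of_mem_inter_left hj) subset_rfl, sum_sub_distrib,
      sum_const, nsmul_eq_mul, mul_comm]
  have hcard : (#B : ℝ) ≤ #(cutBall x v Q (1 / 2)) :=
    Nat.cast_le.2 (card_le_card (cutBall_subset_cutBall (by norm_num)))
  have hgap : (1 / 6 : ℝ) * #B ≤ 1 / 3 * #B - ∑ q ∈ B, x v q := by linarith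
  rw [filter_true_of_mem hnf, card_product, hsum, Nat.cast_mul]
  linarith [mul_le_mul_of_nonneg_left hgap (Nat.cast_nonneg (α := ℝ) #T)]

end

theorem stmt6_general {V : Type*} [DecidableEq V]
    (x : V → V → ℝ)
    (hsym : ∀ u w, x u w = x w u) (hdiag : ∀ u, x u u = 0)
    (htri : ∀ u w p, x u w ≤ x u p + x p w)
    (E : V → V → Prop)
    (Q : Finset V) (v : V) (hv : v ∈ Q)
    (Q1 Q2 : Finset V) (hcut : (Q1, Q2) = oneThirdCut x Q v) :
    (1 / 6 : ℝ) * ((Q1 ×ˢ Q2).filter (fun p => ¬ Forbidden E x p.1 p.2)).card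
      ≤ (∑ p ∈ (Q1 ×ˢ (Q2 ∩ cutBall x v Q (1 / 2))).filter
            (fun p => ¬ Forbidden E x p.1 p.2),
          (min (x v p.2) (1 / 3) - x v p.1))
        + (∑ p ∈ (Q1 ×ˢ (Q2 \ (Q2 ∩ cutBall x v Q (1 / 2)))).filter
              (fun p => ¬ Forbidden E x p.1 p.2 ∧ E p.1 p.2),
            x p.1 p.2)
        + (1 / 6 : ℝ) *
            ((Q1 ×ˢ (Q2 \ (Q2 ∩ cutBall x v Q (1 / 2)))).filter
              (fun p => ¬ Forbidden E x p.1 p.2 ∧ ¬ E p.1 p.2)).card := by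
  unfold oneThirdCut at hcut
  split_ifs at hcut with hcond <;> obtain ⟨rfl, rfl⟩ := Prod.mk_inj.1 hcut
  · refine cut_bound_of_near_bound htri E sdiff_subset (by simp [hdiag]) ?_
    exact near_bound_singleton (hdiag v) hv E hcond
  · refine cut_bound_of_near_bound htri E sdiff_subset (fun i hi => (mem_cutBall.1 hi).2.le) ?_
    exact near_bound_cutBall hsym htri E (not_le.1 hcond)

/-- Corollary 4.5: with `(Q1, Q2)` returned by One-Third-Refine-Cut and
`Q2' := Q2 ∩ B_{1/2}`,
`(1/6)·|NFPrs(Q1,Q2)|` is at most the sum over non-forbidden pairs with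
`i ∈ Q1, j ∈ Q2'` of `min(x(v,j),1/3) − x(v,i)`, plus the sum of `x(i,j)` over
non-forbidden edge pairs with `i ∈ Q1, j ∈ Q2 ∖ Q2'`, plus `1/6` times the
number of non-forbidden non-edge pairs with `i ∈ Q1, j ∈ Q2 ∖ Q2'`. -/
theorem stmt6 {V : Type*} [Fintype V] [DecidableEq V]
    (x : V → V → ℝ)
    (hsym : ∀ u w, x u w = x w u) (hdiag : ∀ u, x u u = 0)
    (hnn : ∀ u w, 0 ≤ x u w) (hub : ∀ u w, x u w ≤ 1)
    (htri : ∀ u w p, x u w ≤ x u p + x p w)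
    (E : V → V → Prop) (hEsym : ∀ u w, E u w ↔ E w u) (hEirr : ∀ u, ¬ E u u)
    (Q : Finset V) (v : V) (hv : v ∈ Q) (hmax : ∃ u ∈ Q, 1 / 3 ≤ x v u)
    (Q1 Q2 : Finset V) (hcut : (Q1, Q2) = oneThirdCut x Q v) :
    (1 / 6 : ℝ) * ((Q1 ×ˢ Q2).filter (fun p => ¬ Forbidden E x p.1 p.2)).card
      ≤ (∑ p ∈ (Q1 ×ˢ (Q2 ∩ cutBall x v Q (1 / 2))).filter
            (fun p => ¬ Forbidden E x p.1 p.2),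
          (min (x v p.2) (1 / 3) - x v p.1))
        + (∑ p ∈ (Q1 ×ˢ (Q2 \ (Q2 ∩ cutBall x v Q (1 / 2)))).filter
              (fun p => ¬ Forbidden E x p.1 p.2 ∧ E p.1 p.2),
            x p.1 p.2)
        + (1 / 6 : ℝ) *
            ((Q1 ×ˢ (Q2 \ (Q2 ∩ cutBall x v Q (1 / 2)))).filter
              (fun p => ¬ Forbidden E x p.1 p.2 ∧ ¬ E p.1 p.2)).card :=
  stmt6_general x hsym hdiag htri E Q v hv Q1 Q2 hcut
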